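/- Let T be an n×n unitary matrix. Then an n×n complex matrix A is T-EP if and only if A T* is EP, if and only if T A† A = A A† T. -/

import Mathlib

open Matrix

/-- The four Penrose conditions: `X` is the Moore-Penrose inverse of `A`. -/
def IsMP {m n : ℕ} (A : Matrix (Fin m) (Fin n) ℂ) (X : Matrix (Fin n) (Fin m) ℂ) : Prop :=
  A * X * A = A ∧ X * A * X = X ∧ (A * X)ᴴ = A * X ∧ (X * A)ᴴ = X * A

/-- `A` is T-EP: range(A) = range(T Aᴴ T) and A = A Tᴴ T. -/
def IsTEP {m n : ℕ} (T A : Matrix (Fin m) (Fin n) ℂ) : Prop :=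
  LinearMap.range (Matrix.mulVecLin A) = LinearMap.range (Matrix.mulVecLin (T * Aᴴ * T)) ∧
    A = A * Tᴴ * T

/-!
Put `B = A * Tᴴ`. As `T` is unitary, `range A = range B` and `range (T Aᴴ T) = range Bᴴ`, so `A`
is T-EP iff `range B = range Bᴴ`; moreover `T A†` is the Moore-Penrose inverse of `B`. Since
`B B†` and `B† B` are the orthogonal projections onto `range B` and `range Bᴴ`, the latter holds
iff `B B† = B† B`. Finally `B B† = A A†` and `B† B = T A† A Tᴴ`, and conjugating by `T` turns
`B B† = B† B` into `T A† A = A A† T`.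
-/

theorem IsStarProjection.eq_of_mul_eq_of_mul_eq {R : Type*} [Monoid R] [StarMul R] {p q : R}
    (hp : IsStarProjection p) (hq : IsStarProjection q) (hpq : p * q = q) (hqp : q * p = p) :
    p = q := by
  rw [← hp.isSelfAdjoint.star_eq, ← hqp, star_mul, hp.isSelfAdjoint.star_eq,
    hq.isSelfAdjoint.star_eq, hpq]

namespace Matrix

variable {R : Type*} [CommRing R] {l m n : Type*} [Fintype m] [Fintype n]

theorem range_mulVecLin_mul_le (M : Matrix l m R) (N : Matrix m n R) :
    LinearMap.range (M * N).mulVecLin ≤ LinearMap.range M.mulVecLin := by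
  rw [mulVecLin_mul]
  exact LinearMap.range_comp_le_range _ _

theorem range_mulVecLin_mul_eq_of_mul_mul_eq {M : Matrix l m R} {N : Matrix m n R}
    {K : Matrix n m R} (h : M * N * K = M) :
    LinearMap.range (M * N).mulVecLin = LinearMap.range M.mulVecLin :=
  le_antisymm (range_mulVecLin_mul_le M N) <| by
    simpa only [h] using range_mulVecLin_mul_le (M * N) K

theorem mul_eq_right_of_range_mulVecLin_le [DecidableEq n] {P : Matrix m m R}
    {M : Matrix m n R} (hP : IsIdempotentElem P)
    (h : LinearMap.range M.mulVecLin ≤ LinearMap.range P.mulVecLin) : P * M = M := by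
  have hP' : IsIdempotentElem P.mulVecLin := by
    rw [IsIdempotentElem, Module.End.mul_eq_comp, ← mulVecLin_mul, hP.eq]
  apply toLin'.injective
  rw [toLin'_apply', toLin'_apply', mulVecLin_mul]
  exact (LinearMap.IsIdempotentElem.comp_eq_right_iff hP' _).mpr h

theorem IsStarProjection.range_mulVecLin_eq_iff [StarRing R] [DecidableEq n]
    {P Q : Matrix n n R} (hP : IsStarProjection P) (hQ : IsStarProjection Q) :
    LinearMap.range P.mulVecLin = LinearMap.range Q.mulVecLin ↔ P = Q := by
  refine ⟨fun h => hP.eq_of_mul_eq_of_mul_eq hQ ?_ ?_, fun h => h ▸ rfl⟩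
  · exact mul_eq_right_of_range_mulVecLin_le hP.isIdempotentElem h.ge
  · exact mul_eq_right_of_range_mulVecLin_le hQ.isIdempotentElem h.le

end Matrix

namespace IsMP

variable {m n : ℕ} {A : Matrix (Fin m) (Fin n) ℂ} {X : Matrix (Fin n) (Fin m) ℂ}

theorem conjTranspose (h : IsMP A X) : IsMP Aᴴ Xᴴ := by
  obtain ⟨h1, h2, h3, h4⟩ := h
  refine ⟨?_, ?_, by rw [← conjTranspose_mul, conjTranspose_conjTranspose, h4],
    by rw [← conjTranspose_mul, conjTranspose_conjTranspose, h3]⟩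
  · rw [← conjTranspose_mul, ← conjTranspose_mul, ← Matrix.mul_assoc, h1]
  · rw [← conjTranspose_mul, ← conjTranspose_mul, ← Matrix.mul_assoc, h2]

theorem unique {Y : Matrix (Fin n) (Fin m) ℂ} (hX : IsMP A X) (hY : IsMP A Y) : X = Y := by
  obtain ⟨hX1, hX2, hX3, hX4⟩ := hX
  obtain ⟨hY1, hY2, hY3, hY4⟩ := hY
  have hX : X = X * A * Y := by
    calc X = X * (A * X)ᴴ := by rw [hX3, ← Matrix.mul_assoc, hX2]
      _ = X * (A * Y * (A * X))ᴴ := by rw [← Matrix.mul_assoc (A * Y), hY1]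
      _ = X * A * X * A * Y := by
        rw [conjTranspose_mul, hX3, hY3]; simp only [Matrix.mul_assoc]
      _ = X * A * Y := by rw [hX2]
  have hY : Y = X * A * Y := by
    calc Y = (Y * A)ᴴ * Y := by rw [hY4, hY2]
      _ = (Y * A * X * A)ᴴ * Y := by rw [Matrix.mul_assoc Y A X, Matrix.mul_assoc Y, hX1]
      _ = X * A * Y * A * Y := by
        rw [Matrix.mul_assoc (Y * A) X A, conjTranspose_mul, hX4, hY4]
        simp only [Matrix.mul_assoc]
      _ = X * A * Y := by
        rw [Matrix.mul_assoc (X * A * Y), Matrix.mul_assoc (X * A), ← Matrix.mul_assoc Y, hY2]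
  exact hX.trans hY.symm

theorem isStarProjection_mul_right (h : IsMP A X) : IsStarProjection (A * X) :=
  ⟨by rw [IsIdempotentElem, ← Matrix.mul_assoc, h.1], h.2.2.1⟩

theorem range_mulVecLin_mul_right (h : IsMP A X) :
    LinearMap.range (A * X).mulVecLin = LinearMap.range A.mulVecLin :=
  range_mulVecLin_mul_eq_of_mul_mul_eq h.1

theorem isStarProjection_mul_left (h : IsMP A X) : IsStarProjection (X * A) := by
  rw [← h.2.2.2, conjTranspose_mul]
  exact h.conjTranspose.isStarProjection_mul_right

theorem range_mulVecLin_mul_left (h : IsMP A X) :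
    LinearMap.range (X * A).mulVecLin = LinearMap.range Aᴴ.mulVecLin := by
  rw [← h.2.2.2, conjTranspose_mul, h.conjTranspose.range_mulVecLin_mul_right]

theorem mul_conjTranspose_right {k : ℕ} {T : Matrix (Fin k) (Fin n) ℂ} (h : IsMP A X)
    (hT : Tᴴ * T = 1) : IsMP (A * Tᴴ) (T * X) := by
  obtain ⟨h1, h2, h3, h4⟩ := h
  have hAX : A * Tᴴ * (T * X) = A * X := by
    rw [Matrix.mul_assoc, ← Matrix.mul_assoc Tᴴ, hT, Matrix.one_mul]
  refine ⟨?_, ?_, by rw [hAX, h3], ?_⟩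
  · rw [hAX, ← Matrix.mul_assoc, h1]
  · rw [Matrix.mul_assoc, hAX, Matrix.mul_assoc, ← Matrix.mul_assoc X, h2]
  · rw [Matrix.mul_assoc T X, ← Matrix.mul_assoc X A, conjTranspose_mul, conjTranspose_mul, h4,
      conjTranspose_conjTranspose, Matrix.mul_assoc]

theorem range_mulVecLin_eq_range_conjTranspose_iff {B Y : Matrix (Fin n) (Fin n) ℂ} (h : IsMP B Y) :
    LinearMap.range B.mulVecLin = LinearMap.range Bᴴ.mulVecLin ↔ B * Y = Y * B := by
  rw [← h.range_mulVecLin_mul_right, ← h.range_mulVecLin_mul_left]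
  exact h.isStarProjection_mul_right.range_mulVecLin_eq_iff h.isStarProjection_mul_left

end IsMP

theorem isTEP_iff_range_mulVecLin_eq {m n : ℕ} {T A : Matrix (Fin m) (Fin n) ℂ}
    (hU1 : T * Tᴴ = 1) (hU2 : Tᴴ * T = 1) :
    IsTEP T A ↔
      LinearMap.range (A * Tᴴ).mulVecLin = LinearMap.range (A * Tᴴ)ᴴ.mulVecLin := by
  have hA : A * Tᴴ * T = A := by rw [Matrix.mul_assoc, hU2, Matrix.mul_one]
  have hTAT : T * Aᴴ * T * Tᴴ = T * Aᴴ := by rw [Matrix.mul_assoc, hU1, Matrix.mul_one]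
  rw [IsTEP, conjTranspose_mul, conjTranspose_conjTranspose,
    range_mulVecLin_mul_eq_of_mul_mul_eq hA, ← range_mulVecLin_mul_eq_of_mul_mul_eq hTAT]
  exact and_iff_left hA.symm

theorem stmt15 {n : ℕ} (A T : Matrix (Fin n) (Fin n) ℂ)
    (Ad : Matrix (Fin n) (Fin n) ℂ) (hU1 : T * Tᴴ = 1) (hU2 : Tᴴ * T = 1)
    (hMP : IsMP A Ad) :
    (IsTEP T A ↔
      ∃ Bd : Matrix (Fin n) (Fin n) ℂ, IsMP (A * Tᴴ) Bd ∧ A * Tᴴ * Bd = Bd * (A * Tᴴ)) ∧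
    (IsTEP T A ↔ T * Ad * A = A * Ad * T) := by
  have hB : IsMP (A * Tᴴ) (T * Ad) := hMP.mul_conjTranspose_right hU2
  have hTEP : IsTEP T A ↔ A * Tᴴ * (T * Ad) = T * Ad * (A * Tᴴ) :=
    (isTEP_iff_range_mulVecLin_eq hU1 hU2).trans hB.range_mulVecLin_eq_range_conjTranspose_iff
  refine ⟨hTEP.trans ⟨fun h => ⟨T * Ad, hB, h⟩, ?_⟩, ?_⟩
  · rintro ⟨Bd, hBd, hcomm⟩
    rwa [hBd.unique hB] at hcomm
  · have hBBd : A * Tᴴ * (T * Ad) = A * Ad := by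
      rw [mul_assoc, ← mul_assoc Tᴴ, hU2, one_mul]
    rw [hTEP, hBBd, ← mul_assoc]
    exact (Units.eq_mul_inv_iff_mul_eq ⟨T, Tᴴ, hU1, hU2⟩).trans eq_comm
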